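/- (Lemma 4.5.) Let {x^k} be a sequence generated by Algorithm 3.1 with data M > 0 and x⁰, let r > 0 be such that M is a Lipschitz constant of f on the closed ball B(x⁰, r), suppose the closed ball B(x⁰, r/2) contains a point of Q, and suppose in addition that either (i) the closed ball B(x⁰, r/2) contains a point of the topological interior of Q, or (ii) the envelope f is strictly convex. Then {x^k} has at most one accumulation point; equivalently, if x* is an accumulation point of {x^k}, then the whole sequence {x^k} converges to x*. -/

import Mathlib

open Filter Topology

noncomputable section

abbrev Euc (n : ℕ) := EuclideanSpace ℝ (Fin n)

/-- `ξ` is a subgradient of `g` at `x`. -/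
def IsSubgradAt {n : ℕ} (g : Euc n → ℝ) (x ξ : Euc n) : Prop :=
  ∀ y : Euc n, g x + (inner ℝ ξ (y - x) : ℝ) ≤ g y

/-- The envelope `f(x) = max_i f_i(x)` of finitely many functions. -/
def envl {n m : ℕ} [NeZero m] (f : Fin m → Euc n → ℝ) (x : Euc n) : ℝ :=
  Finset.univ.sup' Finset.univ_nonempty fun i => f i x

/-- The sequence `x` with relaxation parameters `lam` is generated by Algorithm 3.1
with data `M` for the family `f`. -/
def IsAlgSeq {n m : ℕ} [NeZero m] (f : Fin m → Euc n → ℝ) (M : ℝ)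
    (x : ℕ → Euc n) (lam : ℕ → ℝ) : Prop :=
  ∀ k : ℕ, 0 ≤ lam k ∧
    max 0 (envl f (x k)) ≤ lam k * M ^ 2 ∧
    lam k * M ^ 2 ≤ 2 * max 0 (envl f (x k)) ∧
    ∃ (w : Fin m → ℝ) (ξ : Fin m → Euc n),
      (∀ i, 0 ≤ w i) ∧ (∑ i, w i) = 1 ∧
      (∀ i, f i (x k) < envl f (x k) → w i = 0) ∧
      (∀ i, IsSubgradAt (f i) (x k) (ξ i)) ∧
      x (k + 1) = x k - lam k • ∑ i, w i • ξ i

/-!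
The iteration is Polyak's subgradient method for the envelope `F`. Inside the open ball
`B(x⁰, r)` the subgradients of `F` have norm at most `M`, so there every step is Fejér monotone
with respect to `Q`. Either hypothesis (i) or (ii) yields a feasible `z ∈ B(x⁰, r/2)` towards which
a step from an infeasible point `y` moves by a margin `g y > 0` depending continuously on `y`:
under (i) because a small ball around `z` lies in `Q`, under (ii) by strict convexity at the
midpoint of `y` and `z`. This margin keeps all iterates in the open ball `B(x⁰, r)`, and it rules
out an infeasible cluster point, near which the distance to `z` would drop by a fixed amount
infinitely often. Finally, the distances to a feasible cluster point are nonincreasing, so the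
whole sequence converges to it.
-/

open scoped RealInnerProductSpace

lemma exists_norm_le_inner_eq {E : Type*} [NormedAddCommGroup E] [InnerProductSpace ℝ E]
    (ν : E) {t : ℝ} (ht : 0 ≤ t) : ∃ u : E, ‖u‖ ≤ t ∧ ⟪ν, u⟫ = t * ‖ν‖ := by
  rcases eq_or_ne ν 0 with rfl | hν
  · exact ⟨0, by simpa using ht, by simp⟩
  · have hν' : 0 < ‖ν‖ := norm_pos_iff.mpr hν
    refine ⟨(t / ‖ν‖) • ν, ?_, ?_⟩
    · rw [norm_smul, Real.norm_of_nonneg (by positivity), div_mul_cancel₀ _ hν'.ne']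
    · rw [real_inner_smul_right, real_inner_self_eq_norm_sq]
      field_simp

lemma Antitone.not_frequently_le_sub {d : ℕ → ℝ} (hd : Antitone d)
    (hbdd : BddBelow (Set.range d)) {η : ℝ} (hη : 0 < η) :
    ¬∃ᶠ k in atTop, d (k + 1) ≤ d k - η := by
  have hlim := tendsto_atTop_ciInf hd hbdd
  have hdiff : Tendsto (fun k => d k - d (k + 1)) atTop (𝓝 0) := by
    simpa using hlim.sub (hlim.comp (tendsto_add_atTop_nat 1))
  rw [not_frequently]
  filter_upwards [hdiff.eventually (gt_mem_nhds hη)] with k hk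
  linarith

lemma tendsto_of_antitone_dist {X : Type*} [PseudoMetricSpace X] {x : ℕ → X} {a : X}
    (hd : Antitone fun k => dist (x k) a) (ha : MapClusterPt a atTop x) :
    Tendsto x atTop (𝓝 a) := by
  refine Metric.tendsto_atTop.mpr fun ε hε => ?_
  obtain ⟨N, hN⟩ := (ha.frequently (Metric.ball_mem_nhds a hε)).exists
  exact ⟨N, fun k hk => (hd hk).trans_lt hN⟩

section Subgradient

variable {n : ℕ} {F : Euc n → ℝ} {x ν z : Euc n}

lemma IsSubgradAt.sub_le_inner (hν : IsSubgradAt F x ν) (y : Euc n) :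
    F x - F y ≤ ⟪ν, x - y⟫ := by
  have := hν y
  rw [← neg_sub x y, inner_neg_right] at this
  linarith

lemma IsSubgradAt.norm_le_of_lipschitz {c : Euc n} {M r : ℝ} (hν : IsSubgradAt F x ν)
    (hM : 0 ≤ M) (hx : dist x c < r)
    (hF : ∀ y w, y ∈ Metric.closedBall c r → w ∈ Metric.closedBall c r →
      |F y - F w| ≤ M * ‖y - w‖) :
    ‖ν‖ ≤ M := by
  set s := r - dist x c
  have hs : 0 < s := sub_pos.mpr hx
  obtain ⟨u, hu, hνu⟩ := exists_norm_le_inner_eq ν hs.le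
  have hball : Metric.closedBall x s ⊆ Metric.closedBall c r :=
    Metric.closedBall_subset_closedBall' (by simp [s])
  have hxu : x + u ∈ Metric.closedBall x s := by simpa [dist_eq_norm] using hu
  have hlip := (abs_le.mp (hF _ _ (hball hxu) (hball (Metric.mem_closedBall_self hs.le)))).2
  have hsub := hν (x + u)
  rw [add_sub_cancel_left, hνu] at hsub
  rw [add_sub_cancel_left] at hlip
  have : s * ‖ν‖ ≤ s * M := by nlinarith
  exact le_of_mul_le_mul_left this hs

lemma IsSubgradAt.add_mul_norm_le_inner {ρ : ℝ} (hν : IsSubgradAt F x ν) (hρ : 0 ≤ ρ)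
    (hQ : ∀ w ∈ Metric.closedBall z ρ, F w ≤ 0) : F x + ρ * ‖ν‖ ≤ ⟪ν, x - z⟫ := by
  obtain ⟨u, hu, hνu⟩ := exists_norm_le_inner_eq ν hρ
  have hw := hQ (z + u) (by simpa [dist_eq_norm] using hu)
  have hsub := hν (z + u)
  rw [show z + u - x = u - (x - z) by abel, inner_sub_right, hνu] at hsub
  linarith

/-- Every subgradient step from a point `y` with `F y > 0` moves towards `z` by a margin
governed by `g y`. -/
structure HasSubgradGap (F : Euc n → ℝ) (z : Euc n) (g : Euc n → ℝ) : Prop where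
  pos : ∀ y, 0 < F y → 0 < g y
  add_le_inner : ∀ y ν, IsSubgradAt F y ν → 0 < F y → F y + g y ≤ ⟪ν, y - z⟫

/-- Since `‖ν‖ ‖y - z‖ ≥ F y`, the margin `ρ ‖ν‖` dominates a continuous function of `y`;
the `+ 1` keeps it continuous at `z`. -/
lemma hasSubgradGap_of_closedBall_subset {ρ : ℝ} (hρ : 0 < ρ)
    (hQ : ∀ w ∈ Metric.closedBall z ρ, F w ≤ 0) :
    HasSubgradGap F z fun y => ρ * F y / (‖y - z‖ + 1) where
  pos y hy := by positivity
  add_le_inner y ν hν _ := by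
    have hgap := hν.add_mul_norm_le_inner hρ.le hQ
    have hFz : F z ≤ 0 := hQ z (Metric.mem_closedBall_self hρ.le)
    have hnorm : F y ≤ ‖ν‖ * (‖y - z‖ + 1) := by
      nlinarith [hν.sub_le_inner z, real_inner_le_norm ν (y - z), norm_nonneg ν]
    have : ρ * F y / (‖y - z‖ + 1) ≤ ρ * ‖ν‖ := by
      rw [div_le_iff₀ (by positivity), mul_assoc]
      gcongr
    linarith

lemma hasSubgradGap_of_strictConvexOn (hF : StrictConvexOn ℝ Set.univ F) (hz : F z ≤ 0) :
    HasSubgradGap F z fun y => F y + F z - 2 * F ((1 / 2 : ℝ) • y + (1 / 2 : ℝ) • z) where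
  pos y hy := by
    have hyz : y ≠ z := by
      rintro rfl
      linarith
    have := hF.2 (Set.mem_univ y) (Set.mem_univ z) hyz (by norm_num : (0 : ℝ) < 1 / 2)
      (by norm_num : (0 : ℝ) < 1 / 2) (by norm_num)
    simp only [smul_eq_mul] at this
    linarith
  add_le_inner y ν hν _ := by
    have hmid := hν.sub_le_inner ((1 / 2 : ℝ) • y + (1 / 2 : ℝ) • z)
    rw [show y - ((1 / 2 : ℝ) • y + (1 / 2 : ℝ) • z) = (1 / 2 : ℝ) • (y - z) by module,
      real_inner_smul_right] at hmid
    linarith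

lemma exists_hasSubgradGap {c : Euc n} {R : ℝ} (hFc : Continuous F)
    (hfeas : ∃ z ∈ Metric.closedBall c R, F z ≤ 0)
    (hcond : (∃ z ∈ Metric.closedBall c R, z ∈ interior {y | F y ≤ 0}) ∨
      StrictConvexOn ℝ Set.univ F) :
    ∃ z ∈ Metric.closedBall c R, F z ≤ 0 ∧ ∃ g, Continuous g ∧ HasSubgradGap F z g := by
  rcases hcond with ⟨z, hzc, hz⟩ | hF
  · obtain ⟨ρ, hρ, hQ⟩ :=
      Metric.nhds_basis_closedBall.mem_iff.mp (mem_interior_iff_mem_nhds.mp hz)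
    exact ⟨z, hzc, hQ (Metric.mem_closedBall_self hρ.le), _,
      (continuous_const.mul hFc).div (by fun_prop) fun y => by positivity,
      hasSubgradGap_of_closedBall_subset hρ hQ⟩
  · obtain ⟨z, hzc, hz⟩ := hfeas
    exact ⟨z, hzc, hz, _, by fun_prop, hasSubgradGap_of_strictConvexOn hF hz⟩

end Subgradient

section Envelope

variable {n m : ℕ} [NeZero m] {f : Fin m → Euc n → ℝ}

lemma continuous_envl (hf : ∀ i, Continuous (f i)) : Continuous (envl f) :=
  Continuous.finset_sup'_apply _ fun i _ => hf i

lemma le_envl (i : Fin m) (y : Euc n) : f i y ≤ envl f y :=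
  Finset.le_sup' (fun j => f j y) (Finset.mem_univ i)

lemma isSubgradAt_envl_sum {x : Euc n} {w : Fin m → ℝ} {ξ : Fin m → Euc n}
    (hw0 : ∀ i, 0 ≤ w i) (hw1 : ∑ i, w i = 1) (hact : ∀ i, f i x < envl f x → w i = 0)
    (hξ : ∀ i, IsSubgradAt (f i) x (ξ i)) : IsSubgradAt (envl f) x (∑ i, w i • ξ i) := by
  intro y
  have hactive : ∀ i, w i * f i x = w i * envl f x := fun i => by
    rcases (le_envl (f := f) i x).lt_or_eq with h | h
    · simp [hact i h]
    · rw [h]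
  calc envl f x + ⟪∑ i, w i • ξ i, y - x⟫ = ∑ i, w i * (f i x + ⟪ξ i, y - x⟫) := by
        simp only [mul_add, Finset.sum_add_distrib, hactive, ← Finset.sum_mul, hw1, one_mul,
          sum_inner, real_inner_smul_left]
    _ ≤ ∑ i, w i * envl f y :=
        Finset.sum_le_sum fun i _ =>
          mul_le_mul_of_nonneg_left ((hξ i y).trans (le_envl i y)) (hw0 i)
    _ = envl f y := by rw [← Finset.sum_mul, hw1, one_mul]

end Envelope

structure IsPolyakSeq {n : ℕ} (F : Euc n → ℝ) (M : ℝ) (x : ℕ → Euc n) (lam : ℕ → ℝ)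
    (ν : ℕ → Euc n) : Prop where
  isSubgradAt : ∀ k, IsSubgradAt F (x k) (ν k)
  succ_eq : ∀ k, x (k + 1) = x k - lam k • ν k
  lam_nonneg : ∀ k, 0 ≤ lam k
  pos_le : ∀ k, max 0 (F (x k)) ≤ lam k * M ^ 2
  le_two_pos : ∀ k, lam k * M ^ 2 ≤ 2 * max 0 (F (x k))

lemma IsAlgSeq.exists_isPolyakSeq {n m : ℕ} [NeZero m] {f : Fin m → Euc n → ℝ} {M : ℝ}
    {x : ℕ → Euc n} {lam : ℕ → ℝ} (h : IsAlgSeq f M x lam) :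
    ∃ ν, IsPolyakSeq (envl f) M x lam ν := by
  choose hlam hpos hle w ξ hw0 hw1 hact hξ hstep using h
  exact ⟨fun k => ∑ i, w k i • ξ k i,
    ⟨fun k => isSubgradAt_envl_sum (hw0 k) (hw1 k) (hact k) (hξ k), hstep, hlam, hpos, hle⟩⟩

namespace IsPolyakSeq

variable {n : ℕ} {F : Euc n → ℝ} {M : ℝ} {x ν : ℕ → Euc n} {lam : ℕ → ℝ} {z : Euc n}
  {g : Euc n → ℝ} {k : ℕ}

lemma succ_eq_self (h : IsPolyakSeq F M x lam ν) (hM : 0 < M) (hk : F (x k) ≤ 0) :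
    x (k + 1) = x k := by
  have hle := h.le_two_pos k
  rw [max_eq_left hk, mul_zero] at hle
  have hlam : lam k = 0 := le_antisymm (by nlinarith [pow_pos hM 2]) (h.lam_nonneg k)
  rw [h.succ_eq k, hlam, zero_smul, sub_zero]

lemma sq_norm_succ_sub_le (h : IsPolyakSeq F M x lam ν) (hνM : ‖ν k‖ ≤ M) (z : Euc n) :
    ‖x (k + 1) - z‖ ^ 2
      ≤ ‖x k - z‖ ^ 2 - 2 * lam k * (⟪ν k, x k - z⟫ - max 0 (F (x k))) := by
  have hexp : ‖x (k + 1) - z‖ ^ 2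
      = ‖x k - z‖ ^ 2 - 2 * lam k * ⟪ν k, x k - z⟫ + lam k ^ 2 * ‖ν k‖ ^ 2 := by
    rw [h.succ_eq k, sub_right_comm, norm_sub_sq_real, real_inner_smul_right, norm_smul,
      real_inner_comm, mul_pow, Real.norm_eq_abs, sq_abs]
    ring
  have hlam := h.lam_nonneg k
  have hν2 : ‖ν k‖ ^ 2 ≤ M ^ 2 := pow_le_pow_left₀ (norm_nonneg _) hνM 2
  have : lam k ^ 2 * ‖ν k‖ ^ 2 ≤ 2 * lam k * max 0 (F (x k)) :=
    calc lam k ^ 2 * ‖ν k‖ ^ 2 ≤ lam k * (lam k * M ^ 2) := by nlinarith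
      _ ≤ lam k * (2 * max 0 (F (x k))) := mul_le_mul_of_nonneg_left (h.le_two_pos k) hlam
      _ = 2 * lam k * max 0 (F (x k)) := by ring
  linarith

lemma norm_succ_sub_le (h : IsPolyakSeq F M x lam ν) (hM : 0 < M) (hνM : ‖ν k‖ ≤ M)
    (hz : F z ≤ 0) : ‖x (k + 1) - z‖ ≤ ‖x k - z‖ := by
  rcases le_or_gt (F (x k)) 0 with hk | hk
  · rw [h.succ_eq_self hM hk]
  · have hsq := h.sq_norm_succ_sub_le hνM z
    rw [max_eq_right hk.le] at hsq
    have := mul_nonneg (h.lam_nonneg k)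
      (by linarith [(h.isSubgradAt k).sub_le_inner z] : 0 ≤ ⟪ν k, x k - z⟫ - F (x k))
    exact (sq_le_sq₀ (norm_nonneg _) (norm_nonneg _)).mp (by linarith)

lemma sq_norm_succ_sub_le_of_gap (h : IsPolyakSeq F M x lam ν) (hM : 0 < M)
    (hνM : ‖ν k‖ ≤ M) (hg : HasSubgradGap F z g) (hk : 0 < F (x k)) :
    ‖x (k + 1) - z‖ ^ 2 ≤ ‖x k - z‖ ^ 2 - 2 * (F (x k) * g (x k)) / M ^ 2 := by
  have hsq := h.sq_norm_succ_sub_le hνM z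
  rw [max_eq_right hk.le] at hsq
  have hgap := hg.add_le_inner _ _ (h.isSubgradAt k) hk
  have hlam : F (x k) / M ^ 2 ≤ lam k := by
    rw [div_le_iff₀ (by positivity)]
    simpa [max_eq_right hk.le] using h.pos_le k
  have hg0 := hg.pos _ hk
  have hlam0 := h.lam_nonneg k
  have : 2 * (F (x k) * g (x k)) / M ^ 2 ≤ 2 * lam k * (⟪ν k, x k - z⟫ - F (x k)) :=
    calc 2 * (F (x k) * g (x k)) / M ^ 2 = 2 * (F (x k) / M ^ 2) * g (x k) := by ring
      _ ≤ 2 * lam k * g (x k) := by gcongr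
      _ ≤ 2 * lam k * (⟪ν k, x k - z⟫ - F (x k)) := by gcongr; linarith
  linarith

lemma dist_succ_lt_of_gap (h : IsPolyakSeq F M x lam ν) (hM : 0 < M) (hνM : ‖ν k‖ ≤ M)
    (hg : HasSubgradGap F z g) (hk : 0 < F (x k)) : dist (x (k + 1)) z < dist (x k) z := by
  have hsq := h.sq_norm_succ_sub_le_of_gap hM hνM hg hk
  have : 0 < 2 * (F (x k) * g (x k)) / M ^ 2 := by
    have := hg.pos _ hk
    positivity
  rw [dist_eq_norm, dist_eq_norm]
  exact (sq_lt_sq₀ (norm_nonneg _) (norm_nonneg _)).mp (by linarith)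

lemma dist_lt_of_gap (h : IsPolyakSeq F M x lam ν) (hM : 0 < M) {r : ℝ} (hr : 0 < r)
    (hνM : ∀ k, dist (x k) (x 0) < r → ‖ν k‖ ≤ M) (hg : HasSubgradGap F z g)
    (hz : dist z (x 0) ≤ r / 2) (k : ℕ) : dist (x k) (x 0) < r := by
  suffices ∀ k, dist (x k) z ≤ r / 2 ∧ dist (x k) (x 0) < r from (this k).2
  intro k
  induction k with
  | zero => exact ⟨dist_comm z (x 0) ▸ hz, by simpa using hr⟩
  | succ k ih =>
    rcases le_or_gt (F (x k)) 0 with hk | hk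
    · rwa [h.succ_eq_self hM hk]
    · have hlt := h.dist_succ_lt_of_gap hM (hνM k ih.2) hg hk
      refine ⟨by linarith [ih.1], ?_⟩
      linarith [dist_triangle (x (k + 1)) z (x 0)]

lemma nonpos_of_mapClusterPt (h : IsPolyakSeq F M x lam ν) (hM : 0 < M)
    (hνM : ∀ k, ‖ν k‖ ≤ M) (hFc : Continuous F) (hgc : Continuous g)
    (hg : HasSubgradGap F z g) (hz : F z ≤ 0) {a : Euc n} (ha : MapClusterPt a atTop x) :
    F a ≤ 0 := by
  by_contra! hFa
  have hga := hg.pos a hFa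
  have hnear : ∀ᶠ y in 𝓝 a, 0 < F y ∧ F a * g a / 2 < F y * g y :=
    (hFc.continuousAt.eventually (lt_mem_nhds hFa)).and
      ((hFc.mul hgc).continuousAt.eventually
        (lt_mem_nhds (show F a * g a / 2 < F a * g a by linarith [mul_pos hFa hga])))
  have hdrop : ∃ᶠ k in atTop, ‖x (k + 1) - z‖ ^ 2 ≤ ‖x k - z‖ ^ 2 - F a * g a / M ^ 2 := by
    refine (ha.frequently hnear).mono fun k ⟨hk, hkg⟩ => ?_
    have := h.sq_norm_succ_sub_le_of_gap hM (hνM k) hg hk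
    have : F a * g a / M ^ 2 ≤ 2 * (F (x k) * g (x k)) / M ^ 2 :=
      div_le_div_of_nonneg_right (by linarith) (by positivity)
    linarith
  have hanti : Antitone fun k => ‖x k - z‖ ^ 2 := antitone_nat_of_succ_le fun k =>
    pow_le_pow_left₀ (norm_nonneg _) (h.norm_succ_sub_le hM (hνM k) hz) 2
  exact hanti.not_frequently_le_sub ⟨0, by rintro _ ⟨k, rfl⟩; positivity⟩ (by positivity) hdrop

end IsPolyakSeq

theorem stmt7_general
    {n m : ℕ} [NeZero m] (f : Fin m → Euc n → ℝ)
    (hconv : ∀ i, ConvexOn ℝ Set.univ (f i))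
    (M : ℝ) (hM : 0 < M) (x : ℕ → Euc n) (lam : ℕ → ℝ)
    (halg : IsAlgSeq f M x lam) (x0 : Euc n) (hx0 : x 0 = x0)
    (r : ℝ) (hr : 0 < r)
    (hLip : ∀ y z : Euc n, y ∈ Metric.closedBall x0 r → z ∈ Metric.closedBall x0 r →
      |envl f y - envl f z| ≤ M * ‖y - z‖)
    (hfeas : ∃ z : Euc n, z ∈ Metric.closedBall x0 (r / 2) ∧ envl f z ≤ 0)
    (hcond : (∃ z : Euc n, z ∈ Metric.closedBall x0 (r / 2) ∧
        z ∈ interior {y : Euc n | envl f y ≤ 0}) ∨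
      StrictConvexOn ℝ Set.univ (envl f)) :
    ∀ xs : Euc n, (∃ φ : ℕ → ℕ, StrictMono φ ∧ Tendsto (x ∘ φ) atTop (𝓝 xs)) →
      Tendsto x atTop (𝓝 xs) := by
  rintro xs ⟨φ, hφ, hlim⟩
  subst hx0
  have hcl : MapClusterPt xs atTop x := hlim.mapClusterPt.of_comp hφ.tendsto_atTop
  have hFc : Continuous (envl f) := continuous_envl fun i =>
    continuousOn_univ.mp ((hconv i).continuousOn isOpen_univ)
  obtain ⟨ν, hpol⟩ := halg.exists_isPolyakSeq
  obtain ⟨z, hzc, hz, g, hgc, hg⟩ := exists_hasSubgradGap hFc hfeas hcond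
  have hνM_ball : ∀ k, dist (x k) (x 0) < r → ‖ν k‖ ≤ M := fun k hk =>
    (hpol.isSubgradAt k).norm_le_of_lipschitz hM.le hk hLip
  have hνM : ∀ k, ‖ν k‖ ≤ M := fun k => hνM_ball k (hpol.dist_lt_of_gap hM hr hνM_ball hg hzc k)
  have hxs : envl f xs ≤ 0 := hpol.nonpos_of_mapClusterPt hM hνM hFc hgc hg hz hcl
  refine tendsto_of_antitone_dist (antitone_nat_of_succ_le fun k => ?_) hcl
  simpa only [dist_eq_norm] using hpol.norm_succ_sub_le hM (hνM k) hxs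

theorem stmt7
    {n m : ℕ} (hn : 0 < n) [NeZero m] (f : Fin m → Euc n → ℝ)
    (hconv : ∀ i, ConvexOn ℝ Set.univ (f i))
    (M : ℝ) (hM : 0 < M) (x : ℕ → Euc n) (lam : ℕ → ℝ)
    (halg : IsAlgSeq f M x lam) (x0 : Euc n) (hx0 : x 0 = x0)
    (r : ℝ) (hr : 0 < r)
    (hLip : ∀ y z : Euc n, y ∈ Metric.closedBall x0 r → z ∈ Metric.closedBall x0 r →
      |envl f y - envl f z| ≤ M * ‖y - z‖)
    (hfeas : ∃ z : Euc n, z ∈ Metric.closedBall x0 (r / 2) ∧ envl f z ≤ 0)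
    (hcond : (∃ z : Euc n, z ∈ Metric.closedBall x0 (r / 2) ∧
        z ∈ interior {y : Euc n | envl f y ≤ 0}) ∨
      StrictConvexOn ℝ Set.univ (envl f)) :
    ∀ xs : Euc n, (∃ φ : ℕ → ℕ, StrictMono φ ∧ Tendsto (x ∘ φ) atTop (𝓝 xs)) →
      Tendsto x atTop (𝓝 xs) :=
  stmt7_general f hconv M hM x lam halg x0 hx0 r hr hLip hfeas hcond
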